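/- Let {|ψ_i⟩}_{i=1}^{N-1} be pure states in ℂ^d with k-copy discriminability p (with uniform prior over N−1 states). Then there are N density matrices on ℂ^d whose k-copy discriminability with uniform prior is at least ((N−1)/N)·p + (1/N)·(1 − C(d+k-1,k)/d^k). In particular, the concrete set consisting of the N−1 pure states together with the maximally mixed state I/d achieves this bound. -/

import Mathlib

open ComplexOrder Matrix
open scoped BigOperators

/-- The `k`-fold tensor power of a matrix on `ℂ^d`. -/
noncomputable def kronPow (d k : ℕ) (A : Matrix (Fin d) (Fin d) ℂ) :
    Matrix (Fin k → Fin d) (Fin k → Fin d) ℂ :=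
  Matrix.of fun f g => ∏ l, A (f l) (g l)

/-- The rank-one projector `|ψ⟩⟨ψ|`. -/
noncomputable def pureProj (d : ℕ) (ψ : Fin d → ℂ) : Matrix (Fin d) (Fin d) ℂ :=
  Matrix.of fun a b => ψ a * star (ψ b)

namespace MBP

variable {d k : ℕ}

def permMat (d k : ℕ) (σ : Equiv.Perm (Fin k)) :
    Matrix (Fin k → Fin d) (Fin k → Fin d) ℂ :=
  Matrix.of fun f g => if g = f ∘ σ then 1 else 0

lemma permMat_mul (σ τ : Equiv.Perm (Fin k)) :
    permMat d k σ * permMat d k τ = permMat d k (σ * τ) := by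
  ext f g
  simp only [permMat, Matrix.mul_apply, Matrix.of_apply, ite_mul, one_mul, zero_mul,
    Finset.sum_ite_eq' Finset.univ (f ∘ σ)]
  simp [Equiv.Perm.coe_mul, Function.comp_assoc]
  congr

lemma permMat_conjTranspose (σ : Equiv.Perm (Fin k)) :
    (permMat d k σ)ᴴ = permMat d k σ⁻¹ := by
  ext f g
  simp only [permMat, Matrix.conjTranspose_apply, Matrix.of_apply]
  have h : f = g ∘ ⇑σ ↔ g = f ∘ ⇑σ⁻¹ := by
    constructor <;> intro h <;> subst h <;> ext x <;> simp
  rw [apply_ite star, star_one, star_zero, if_congr h rfl rfl]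

lemma permMat_mul_kronPow_pureProj (σ : Equiv.Perm (Fin k)) (ψ : Fin d → ℂ) :
    permMat d k σ * kronPow d k (pureProj d ψ) = kronPow d k (pureProj d ψ) := by
  ext f g
  simp only [permMat, kronPow, pureProj, Matrix.mul_apply, Matrix.of_apply, ite_mul, one_mul,
    zero_mul, Finset.sum_ite_eq' Finset.univ (f ∘ σ), Finset.mem_univ, if_true,
    Function.comp_apply]
  rw [Finset.prod_mul_distrib, Finset.prod_mul_distrib,
    Equiv.prod_comp σ (fun l => ψ (f l))]

lemma kronPow_conjTranspose (A : Matrix (Fin d) (Fin d) ℂ) :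
    (kronPow d k A)ᴴ = kronPow d k Aᴴ := by
  ext f g
  simp [kronPow, Matrix.conjTranspose_apply]

lemma pureProj_conjTranspose (ψ : Fin d → ℂ) : (pureProj d ψ)ᴴ = pureProj d ψ := by
  ext a b
  simp [pureProj, Matrix.conjTranspose_apply, mul_comm]

/-- the symmetrizer -/
noncomputable def symProj (d k : ℕ) : Matrix (Fin k → Fin d) (Fin k → Fin d) ℂ :=
  ((Nat.factorial k : ℂ))⁻¹ • ∑ σ : Equiv.Perm (Fin k), permMat d k σ

lemma symProj_conjTranspose : (symProj d k)ᴴ = symProj d k := by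
  unfold symProj
  rw [Matrix.conjTranspose_smul]
  rw [star_inv₀]
  congr 1
  · norm_cast
  · rw [Matrix.conjTranspose_sum]
    simp_rw [permMat_conjTranspose]
    exact Fintype.sum_equiv (Equiv.inv _) _ _ (fun σ => rfl)

lemma symProj_idem : symProj d k * symProj d k = symProj d k := by
  have hf : ((Nat.factorial k : ℂ)) ≠ 0 := by
    exact_mod_cast Nat.cast_ne_zero.mpr (Nat.factorial_ne_zero k)
  unfold symProj
  rw [Matrix.smul_mul, Matrix.mul_smul, smul_smul, Finset.sum_mul]
  simp_rw [Finset.mul_sum, permMat_mul]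
  have : ∀ σ : Equiv.Perm (Fin k), ∑ τ : Equiv.Perm (Fin k), permMat d k (σ * τ)
      = ∑ τ : Equiv.Perm (Fin k), permMat d k τ := by
    intro σ
    exact Fintype.sum_equiv (Equiv.mulLeft σ) _ _ (fun τ => rfl)
  simp_rw [this]
  rw [Finset.sum_const, Finset.card_univ, Fintype.card_perm, Fintype.card_fin,
    ← Nat.cast_smul_eq_nsmul ℂ, smul_smul]
  congr 1
  field_simp

lemma symProj_mul_kron (ψ : Fin d → ℂ) :
    symProj d k * kronPow d k (pureProj d ψ) = kronPow d k (pureProj d ψ) := by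
  have hf : ((Nat.factorial k : ℂ)) ≠ 0 := by
    exact_mod_cast Nat.cast_ne_zero.mpr (Nat.factorial_ne_zero k)
  unfold symProj
  rw [Matrix.smul_mul, Finset.sum_mul]
  simp_rw [permMat_mul_kronPow_pureProj]
  rw [Finset.sum_const, Finset.card_univ, Fintype.card_perm, Fintype.card_fin,
    ← Nat.cast_smul_eq_nsmul ℂ, smul_smul, inv_mul_cancel₀ hf, one_smul]

lemma kron_mul_symProj (ψ : Fin d → ℂ) :
    kronPow d k (pureProj d ψ) * symProj d k = kronPow d k (pureProj d ψ) := by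
  have h1 : (kronPow d k (pureProj d ψ))ᴴ = kronPow d k (pureProj d ψ) := by
    rw [kronPow_conjTranspose, pureProj_conjTranspose]
  calc kronPow d k (pureProj d ψ) * symProj d k
      = ((symProj d k)ᴴ * (kronPow d k (pureProj d ψ))ᴴ)ᴴ := by
        rw [← Matrix.conjTranspose_mul, Matrix.conjTranspose_conjTranspose]
    _ = kronPow d k (pureProj d ψ) := by
        rw [symProj_conjTranspose, h1, symProj_mul_kron, h1]


section Action

local instance actSMul : SMul (Equiv.Perm (Fin k)) (Fin k → Fin d) :=
  ⟨fun σ f => f ∘ ⇑σ⁻¹⟩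

lemma act_smul_def (σ : Equiv.Perm (Fin k)) (f : Fin k → Fin d) : σ • f = f ∘ ⇑σ⁻¹ := rfl

local instance actMulAction : MulAction (Equiv.Perm (Fin k)) (Fin k → Fin d) where
  one_smul f := by ext x; simp [act_smul_def]
  mul_smul σ τ f := by ext x; simp [act_smul_def]

/-- map to the multiset of values -/
noncomputable def toSym :
    Quotient (MulAction.orbitRel (Equiv.Perm (Fin k)) (Fin k → Fin d)) → Sym (Fin d) k :=
  Quotient.lift (fun f => (⟨Multiset.map f Finset.univ.val, by simp⟩ : Sym (Fin d) k))
    (by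
      rintro f g ⟨σ, rfl⟩
      ext1
      show Multiset.map (g ∘ ⇑σ⁻¹) Finset.univ.val = Multiset.map g Finset.univ.val
      rw [← Multiset.map_map, Multiset.map_univ_val_equiv])

lemma exists_perm_of_multiset_eq {α : Type*} [LinearOrder α] {f g : Fin k → α}
    (h : Multiset.map f Finset.univ.val = Multiset.map g Finset.univ.val) :
    ∃ σ : Equiv.Perm (Fin k), f = g ∘ ⇑σ := by
  have h' : ((List.ofFn f : List α) : Multiset α) = (List.ofFn g : List α) := by
    simpa [Fin.univ_def, List.ofFn_eq_map] using h
  have hp : (List.ofFn f).Perm (List.ofFn g) := Multiset.coe_eq_coe.mp h'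
  have h1 : f ∘ ⇑(Tuple.sort f) = g ∘ ⇑(Tuple.sort g) := by
    apply List.ofFn_injective
    exact List.Perm.eq_of_sortedLE
      (Tuple.monotone_sort f).sortedLE_ofFn (Tuple.monotone_sort g).sortedLE_ofFn
      (((Tuple.sort f).ofFn_comp_perm f).trans (hp.trans ((Tuple.sort g).ofFn_comp_perm g).symm))
  refine ⟨(Tuple.sort g) * (Tuple.sort f)⁻¹, ?_⟩
  ext x
  have := congrFun h1 ((Tuple.sort f)⁻¹ x)
  simpa using this

lemma toSym_bijective : Function.Bijective (toSym (d := d) (k := k)) := by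
  constructor
  · rintro ⟨f⟩ ⟨g⟩ h
    have hm : Multiset.map f Finset.univ.val = Multiset.map g Finset.univ.val :=
      congrArg Subtype.val h
    obtain ⟨σ, hσ⟩ := exists_perm_of_multiset_eq hm
    exact Quotient.sound ⟨σ⁻¹, by ext x; simp [act_smul_def, hσ]⟩
  · rintro ⟨s, hs⟩
    set l := s.toList with hl
    have hlen : l.length = k := by rw [hl, Multiset.length_toList, hs]
    refine ⟨Quotient.mk _ (fun i => l.get (Fin.cast hlen.symm i)), ?_⟩
    ext1
    show Multiset.map (fun i => l.get (Fin.cast hlen.symm i)) Finset.univ.val = s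
    have : Multiset.map (fun i => l.get (Fin.cast hlen.symm i)) Finset.univ.val
        = ((List.ofFn (fun i => l.get (Fin.cast hlen.symm i)) : List (Fin d)) : Multiset (Fin d)) := by
      simp [Fin.univ_def, List.ofFn_eq_map]
    rw [this]
    have : List.ofFn (fun i => l.get (Fin.cast hlen.symm i)) = l := by
      apply List.ext_getElem
      · simp [hlen]
      · intro i h1 h2
        simp [List.getElem_ofFn]
    rw [this, hl, Multiset.coe_toList]

lemma card_orbits :
    letI := Fintype.ofFinite (Quotient (MulAction.orbitRel (Equiv.Perm (Fin k)) (Fin k → Fin d)))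
    Fintype.card (Quotient (MulAction.orbitRel (Equiv.Perm (Fin k)) (Fin k → Fin d)))
      = (d + k - 1).choose k := by
  letI := Fintype.ofFinite (Quotient (MulAction.orbitRel (Equiv.Perm (Fin k)) (Fin k → Fin d)))
  rw [Fintype.card_congr (Equiv.ofBijective _ toSym_bijective)]
  rw [Sym.card_sym_eq_choose, Fintype.card_fin]

lemma trace_permMat (σ : Equiv.Perm (Fin k)) :
    (permMat d k σ).trace
      = (Fintype.card (MulAction.fixedBy (Fin k → Fin d) σ) : ℂ) := by
  have hset : ∀ f : Fin k → Fin d, f ∈ MulAction.fixedBy (Fin k → Fin d) σ ↔ f = f ∘ ⇑σ := by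
    intro f
    rw [MulAction.mem_fixedBy, act_smul_def]
    constructor
    · intro h; funext x; simpa using congrFun h (σ x)
    · intro h; funext x; simpa using congrFun h (σ⁻¹ x)
  have h2 : Fintype.card (MulAction.fixedBy (Fin k → Fin d) σ)
      = (Finset.univ.filter (fun f : Fin k → Fin d => f = f ∘ ⇑σ)).card := by
    rw [← Fintype.card_subtype]
    exact Fintype.card_congr (Equiv.subtypeEquivRight fun f => (hset f))
  rw [h2, Matrix.trace]
  simp only [Matrix.diag, permMat, Matrix.of_apply]
  rw [Finset.sum_boole]


lemma trace_symProj : (symProj d k).trace = ((d + k - 1).choose k : ℂ) := by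
  classical
  letI : Fintype (Quotient (MulAction.orbitRel (Equiv.Perm (Fin k)) (Fin k → Fin d))) :=
    Fintype.ofFinite _
  have hf : ((Nat.factorial k : ℂ)) ≠ 0 := by
    exact_mod_cast Nat.cast_ne_zero.mpr (Nat.factorial_ne_zero k)
  unfold symProj
  rw [Matrix.trace_smul, Matrix.trace_sum]
  simp_rw [trace_permMat]
  rw [← Nat.cast_sum]
  rw [MulAction.sum_card_fixedBy_eq_card_orbits_mul_card_group]
  rw [card_orbits, Fintype.card_perm, Fintype.card_fin]
  push_cast
  rw [smul_eq_mul]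
  field_simp

end Action


lemma symProj_posSemidef : (symProj d k).PosSemidef := by
  have h := Matrix.posSemidef_conjTranspose_mul_self (symProj d k)
  rwa [symProj_conjTranspose, symProj_idem] at h

lemma one_sub_symProj_posSemidef :
    ((1 : Matrix (Fin k → Fin d) (Fin k → Fin d) ℂ) - symProj d k).PosSemidef := by
  have hct : ((1 : Matrix (Fin k → Fin d) (Fin k → Fin d) ℂ) - symProj d k)ᴴ
      = 1 - symProj d k := by
    rw [Matrix.conjTranspose_sub, Matrix.conjTranspose_one, symProj_conjTranspose]
  have h := Matrix.posSemidef_conjTranspose_mul_self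
    ((1 : Matrix (Fin k → Fin d) (Fin k → Fin d) ℂ) - symProj d k)
  have heq : ((1 : Matrix (Fin k → Fin d) (Fin k → Fin d) ℂ) - symProj d k)ᴴ *
      ((1 : Matrix (Fin k → Fin d) (Fin k → Fin d) ℂ) - symProj d k) = 1 - symProj d k := by
    rw [hct, sub_mul, mul_sub, mul_sub, one_mul, mul_one, symProj_idem, sub_self, sub_zero, one_mul]
  rwa [heq] at h

lemma kronPow_smul_one (hd : 0 < d) :
    kronPow d k ((d : ℂ)⁻¹ • 1) = (((d : ℂ)) ^ k)⁻¹ • (1 : Matrix (Fin k → Fin d) (Fin k → Fin d) ℂ) := by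
  ext f g
  simp only [kronPow, Matrix.of_apply, Matrix.smul_apply, Matrix.one_apply, smul_eq_mul,
    mul_ite, mul_one, mul_zero]
  rw [Finset.prod_ite_zero, Finset.prod_const, Finset.card_univ, Fintype.card_fin]
  simp only [Finset.mem_univ, true_implies]
  by_cases hfg : f = g
  · subst hfg
    simp [inv_pow]
  · rw [if_neg (fun h => hfg (funext h)), if_neg hfg]

lemma trace_kron_sandwich (ψ : Fin d → ℂ) (A : Matrix (Fin k → Fin d) (Fin k → Fin d) ℂ) :
    (kronPow d k (pureProj d ψ) * (symProj d k * A * symProj d k)).trace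
      = (kronPow d k (pureProj d ψ) * A).trace := by
  have h1 : kronPow d k (pureProj d ψ) * (symProj d k * A * symProj d k)
      = (kronPow d k (pureProj d ψ) * A) * symProj d k := by
    rw [← Matrix.mul_assoc, ← Matrix.mul_assoc, kron_mul_symProj]
  rw [h1, Matrix.trace_mul_comm, ← Matrix.mul_assoc, symProj_mul_kron]

end MBP

open MBP in
/-- Given `n` pure states in `ℂ^d` whose `k`-copy discrimination (uniform prior) is achieved
with success probability `p` by some POVM, the set of `n+1` states consisting of those pure
states together with the maximally mixed state `𝕀/d` has `k`-copy discriminability at least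
`(n/(n+1))·p + (1/(n+1))·(1 − C(d+k-1,k)/d^k)`. -/
theorem mixed_beats_pure_lower_bound (d k n : ℕ) (hd : 0 < d) (hn : 0 < n)
    (ψ : Fin n → Fin d → ℂ) (hψ : ∀ i, ∑ j, star (ψ i j) * ψ i j = 1)
    (p : ℝ)
    (L : Fin n → Matrix (Fin k → Fin d) (Fin k → Fin d) ℂ)
    (hLpos : ∀ i, (L i).PosSemidef) (hLsum : ∑ i, L i = 1)
    (hLp : (n : ℝ)⁻¹ * (∑ i, (kronPow d k (pureProj d (ψ i)) * L i).trace).re = p) :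
    ∃ M : Fin (n + 1) → Matrix (Fin k → Fin d) (Fin k → Fin d) ℂ,
      (∀ i, (M i).PosSemidef) ∧ (∑ i, M i = 1) ∧
      ((n : ℝ) / (n + 1)) * p +
          ((n : ℝ) + 1)⁻¹ * (1 - (Nat.choose (d + k - 1) k : ℝ) / d ^ k) ≤
        ((n : ℝ) + 1)⁻¹ *
          (∑ i, (kronPow d k
              (Fin.lastCases ((d : ℂ)⁻¹ • (1 : Matrix (Fin d) (Fin d) ℂ))
                (fun j => pureProj d (ψ j)) i) * M i).trace).re := by
  refine ⟨Fin.lastCases (1 - symProj d k) (fun j => symProj d k * L j * symProj d k), ?_, ?_, ?_⟩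
  · intro i
    induction i using Fin.lastCases with
    | last => simpa using one_sub_symProj_posSemidef
    | cast j =>
      have h := (hLpos j).mul_mul_conjTranspose_same (symProj d k)
      rw [symProj_conjTranspose] at h
      simpa using h
  · rw [Fin.sum_univ_castSucc]
    simp only [Fin.lastCases_castSucc, Fin.lastCases_last]
    have : ∑ j : Fin n, symProj d k * L j * symProj d k
        = symProj d k * (∑ j, L j) * symProj d k := by
      rw [Finset.mul_sum, Finset.sum_mul]
    rw [this, hLsum, Matrix.mul_one, symProj_idem]
    abel
  · -- value computation
    beta_reduce
    have hdk : ((d : ℂ)) ^ k ≠ 0 := by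
      positivity
    have hsum : (∑ i : Fin (n+1), (kronPow d k
          (Fin.lastCases ((d : ℂ)⁻¹ • (1 : Matrix (Fin d) (Fin d) ℂ))
            (fun j => pureProj d (ψ j)) i) *
          (Fin.lastCases (motive := fun _ => Matrix (Fin k → Fin d) (Fin k → Fin d) ℂ)
            (1 - symProj d k) (fun j => symProj d k * L j * symProj d k) i)).trace)
        = (∑ j : Fin n, (kronPow d k (pureProj d (ψ j)) * L j).trace)
          + (((1 : ℝ) - ((d + k - 1).choose k : ℝ) / (d : ℝ) ^ k : ℝ) : ℂ) := by
      rw [Fin.sum_univ_castSucc]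
      simp only [Fin.lastCases_castSucc, Fin.lastCases_last]
      congr 1
      · exact Finset.sum_congr rfl fun j _ => trace_kron_sandwich (ψ j) (L j)
      · rw [kronPow_smul_one hd, Matrix.smul_mul, Matrix.one_mul, Matrix.trace_smul,
          Matrix.trace_sub, Matrix.trace_one, trace_symProj]
        have hcard : (Fintype.card (Fin k → Fin d) : ℂ) = (d : ℂ) ^ k := by
          rw [Fintype.card_fun, Fintype.card_fin, Fintype.card_fin]
          push_cast
          ring
        rw [hcard, smul_eq_mul]
        have hdkR : ((d : ℝ)) ^ k ≠ 0 := by positivity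
        push_cast
        field_simp
    rw [hsum]
    rw [Complex.add_re, Complex.ofReal_re]
    have hre : (∑ j : Fin n, (kronPow d k (pureProj d (ψ j)) * L j).trace).re = n * p := by
      rw [← hLp]
      have hn' : ((n : ℝ)) ≠ 0 := Nat.cast_ne_zero.mpr hn.ne'
      field_simp
    rw [hre]
    have hn1 : ((n : ℝ) + 1) ≠ 0 := by positivity
    apply le_of_eq
    field_simp
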